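/- arXiv:2504.00560 — 9 statements merged into one kernel-verified Lean document; each statement's English description precedes it below -/
import Mathlib

section
/- Let m, h, ω > 0 with δ := (h²ω²−30)(h²ω²−10) ≠ 0, and fix real q_ℓ, q_r. Then the unique pair (q_ξ, q_{1−ξ}) of real numbers satisfying ∂L_d/∂q_ξ = 0 and ∂L_d/∂q_{1−ξ} = 0 is q_ξ = (1/δ)[−5(h²ω²−30)(q_r+q_ℓ) + 3√5(h²ω²−10)(q_r−q_ℓ)] and q_{1−ξ} = (1/δ)[−5(h²ω²−30)(q_r+q_ℓ) − 3√5(h²ω²−10)(q_r−q_ℓ)]. -/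
/-! Both internal Euler–Lagrange equations are linear, with the symmetric system matrix
`[[a, -50], [-50, a]]`, `a = 100 - 5 h²ω²`, whose determinant `a² - 50²` is `25 δ`;
Cramer's rule gives the stated solution. -/

/-- The discrete Lagrangian of the harmonic oscillator with mass `m`, time step `h`
and angular frequency `ω`. -/
noncomputable def Ld (m h ω qℓ qξ q1mξ qr : ℝ) : ℝ :=
  (m / (12 * h)) *
    (26 * (qℓ^2 + qr^2) - 2 * qℓ * qr + 50 * (qξ^2 - qξ * q1mξ + q1mξ^2)
      - 25 * (qℓ + qr) * (qξ + q1mξ)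
      - 15 * Real.sqrt 5 * (qℓ - qr) * (qξ - q1mξ))
  - (m * h * ω^2 / 24) * (qℓ^2 + qr^2 + 5 * (qξ^2 + q1mξ^2))

theorem hasDerivAt_quadratic (a b c x : ℝ) :
    HasDerivAt (fun t => a * t ^ 2 + b * t + c) (2 * a * x + b) x := by
  refine ((((hasDerivAt_pow 2 x).const_mul a).add ((hasDerivAt_id' x).const_mul b)).add_const
    c).congr_deriv ?_
  norm_num
  ring

theorem symmetric_linear_system_iff {a b u v x y : ℝ} (hdet : a ^ 2 - b ^ 2 ≠ 0) :
    (a * x - b * y = u ∧ a * y - b * x = v) ↔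
      (x = (a * u + b * v) / (a ^ 2 - b ^ 2) ∧ y = (a * v + b * u) / (a ^ 2 - b ^ 2)) := by
  constructor
  · rintro ⟨hu, hv⟩
    constructor <;> rw [eq_div_iff hdet]
    · linear_combination a * hu + b * hv
    · linear_combination a * hv + b * hu
  · rintro ⟨rfl, rfl⟩
    constructor <;> field_simp <;> ring

namespace Ld

variable {m h ω : ℝ}

theorem symm (qℓ qξ q1mξ qr : ℝ) : Ld m h ω qℓ qξ q1mξ qr = Ld m h ω qr q1mξ qξ qℓ := by
  unfold Ld; ring

theorem deriv_qξ (hh : h ≠ 0) (qℓ qξ q1mξ qr : ℝ) :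
    deriv (fun x => Ld m h ω qℓ x q1mξ qr) qξ =
      m / (12 * h) * ((100 - 5 * (h ^ 2 * ω ^ 2)) * qξ - 50 * q1mξ
        - (25 * (qℓ + qr) + 15 * Real.sqrt 5 * (qℓ - qr))) := by
  have hquad : (fun x => Ld m h ω qℓ x q1mξ qr) = fun x =>
      (m / (12 * h) * 50 - m * h * ω ^ 2 / 24 * 5) * x ^ 2
        + m / (12 * h) * (-50 * q1mξ - 25 * (qℓ + qr) - 15 * Real.sqrt 5 * (qℓ - qr)) * x
        + Ld m h ω qℓ 0 q1mξ qr := by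
    funext x; unfold Ld; ring
  rw [hquad, (hasDerivAt_quadratic _ _ _ qξ).deriv]
  field_simp
  ring

theorem deriv_q1mξ (hh : h ≠ 0) (qℓ qξ q1mξ qr : ℝ) :
    deriv (fun y => Ld m h ω qℓ qξ y qr) q1mξ =
      m / (12 * h) * ((100 - 5 * (h ^ 2 * ω ^ 2)) * q1mξ - 50 * qξ
        - (25 * (qr + qℓ) + 15 * Real.sqrt 5 * (qr - qℓ))) := by
  simp only [Ld.symm qℓ qξ _ qr]
  exact deriv_qξ hh qr q1mξ qξ qℓ

end Ld

theorem internal_EL_unique_solution_general (m h ω : ℝ) (hm : 0 < m) (hh : 0 < h)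
    (hδ : (h^2 * ω^2 - 30) * (h^2 * ω^2 - 10) ≠ 0) (qℓ qr : ℝ) (qξ q1mξ : ℝ) :
    (deriv (fun x => Ld m h ω qℓ x q1mξ qr) qξ = 0
      ∧ deriv (fun y => Ld m h ω qℓ qξ y qr) q1mξ = 0)
    ↔ (qξ = (1 / ((h^2 * ω^2 - 30) * (h^2 * ω^2 - 10))) *
          (-5 * (h^2 * ω^2 - 30) * (qr + qℓ) + 3 * Real.sqrt 5 * (h^2 * ω^2 - 10) * (qr - qℓ))
        ∧ q1mξ = (1 / ((h^2 * ω^2 - 30) * (h^2 * ω^2 - 10))) *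
          (-5 * (h^2 * ω^2 - 30) * (qr + qℓ) - 3 * Real.sqrt 5 * (h^2 * ω^2 - 10) * (qr - qℓ))) := by
  have hscale : m / (12 * h) ≠ 0 := by positivity
  have hdet_eq : (100 - 5 * (h ^ 2 * ω ^ 2)) ^ 2 - 50 ^ 2
      = 25 * ((h ^ 2 * ω ^ 2 - 30) * (h ^ 2 * ω ^ 2 - 10)) := by ring
  have hdet : (100 - 5 * (h ^ 2 * ω ^ 2)) ^ 2 - 50 ^ 2 ≠ 0 := by
    rw [hdet_eq]; exact mul_ne_zero (by norm_num) hδ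
  rw [Ld.deriv_qξ hh.ne', Ld.deriv_q1mξ hh.ne', mul_eq_zero, mul_eq_zero, or_iff_right hscale,
    or_iff_right hscale, sub_eq_zero, sub_eq_zero, symmetric_linear_system_iff hdet, hdet_eq]
  congr! 2 <;> field_simp <;> ring

/-- The internal discrete Euler–Lagrange equations ∂L_d/∂q_ξ = 0, ∂L_d/∂q_{1−ξ} = 0 have
the stated explicit solution as their unique solution. -/
theorem internal_EL_unique_solution (m h ω : ℝ) (hm : 0 < m) (hh : 0 < h) (hω : 0 < ω)
    (hδ : (h^2 * ω^2 - 30) * (h^2 * ω^2 - 10) ≠ 0) (qℓ qr : ℝ) (qξ q1mξ : ℝ) :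
    (deriv (fun x => Ld m h ω qℓ x q1mξ qr) qξ = 0
      ∧ deriv (fun y => Ld m h ω qℓ qξ y qr) q1mξ = 0)
    ↔ (qξ = (1 / ((h^2 * ω^2 - 30) * (h^2 * ω^2 - 10))) *
          (-5 * (h^2 * ω^2 - 30) * (qr + qℓ) + 3 * Real.sqrt 5 * (h^2 * ω^2 - 10) * (qr - qℓ))
        ∧ q1mξ = (1 / ((h^2 * ω^2 - 30) * (h^2 * ω^2 - 10))) *
          (-5 * (h^2 * ω^2 - 30) * (qr + qℓ) - 3 * Real.sqrt 5 * (h^2 * ω^2 - 10) * (qr - qℓ))) :=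
  internal_EL_unique_solution_general m h ω hm hh hδ qℓ qr qξ q1mξ
end

section
/- Let m, h, ω > 0 with δ := (h²ω²−30)(h²ω²−10) ≠ 0. For all real q_ℓ, q_r, substituting q_ξ = (1/δ)[−5(h²ω²−30)(q_r+q_ℓ) + 3√5(h²ω²−10)(q_r−q_ℓ)] and q_{1−ξ} = (1/δ)[−5(h²ω²−30)(q_r+q_ℓ) − 3√5(h²ω²−10)(q_r−q_ℓ)] into the discrete Lagrangian L_d yields L_d = L_r(q_ℓ, q_r) := (1/(6hδ))[(m/4)(−h⁶ω⁶ + 92h⁴ω⁴ − 1680h²ω² + 3600)(q_ℓ² + q_r²) − m(h⁴ω⁴ + 60h²ω² + 1800) q_ℓ q_r]. -/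
theorem two_mul_quadratic_eq_of_stationary {R : Type*} [CommRing R] {a b x : R}
    (hx : 2 * a * x + b = 0) : 2 * (a * x ^ 2 + b * x) = b * x := by
  linear_combination x * hx

theorem Ld_eq_sum_diff (m h ω qℓ qξ q1mξ qr : ℝ) :
    Ld m h ω qℓ qξ q1mξ qr =
      (m / (12 * h) * (26 * (qℓ^2 + qr^2) - 2 * qℓ * qr) - m * h * ω^2 / 24 * (qℓ^2 + qr^2))
      + ((25 * m / (24 * h) - 5 * m * h * ω^2 / 48) * (qξ + q1mξ)^2
          + (-(25 * m / (12 * h)) * (qℓ + qr)) * (qξ + q1mξ))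
      + ((75 * m / (24 * h) - 5 * m * h * ω^2 / 48) * (qξ - q1mξ)^2
          + (-(15 * Real.sqrt 5 * m / (12 * h)) * (qℓ - qr)) * (qξ - q1mξ)) := by
  unfold Ld
  ring

theorem internal_add_eq {K : Type*} [Field K] {k : K} (h30 : k - 30 ≠ 0) (h10 : k - 10 ≠ 0)
    (c u v : K) :
    1 / ((k - 30) * (k - 10)) * (-5 * (k - 30) * u + c * (k - 10) * v)
      + 1 / ((k - 30) * (k - 10)) * (-5 * (k - 30) * u - c * (k - 10) * v)
      = -10 * u / (k - 10) := by
  field_simp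
  ring

theorem internal_sub_eq {K : Type*} [Field K] {k : K} (h30 : k - 30 ≠ 0) (h10 : k - 10 ≠ 0)
    (c u v : K) :
    1 / ((k - 30) * (k - 10)) * (-5 * (k - 30) * u + c * (k - 10) * v)
      - 1 / ((k - 30) * (k - 10)) * (-5 * (k - 30) * u - c * (k - 10) * v)
      = 2 * c * v / (k - 30) := by
  field_simp
  ring

theorem two_mul_Ld_eq_of_internal_stationary {m h ω qℓ qξ q1mξ qr s d : ℝ}
    (hs : qξ + q1mξ = s) (hd : qξ - q1mξ = d)
    (hs_stat : 2 * (25 * m / (24 * h) - 5 * m * h * ω^2 / 48) * s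
      + -(25 * m / (12 * h)) * (qℓ + qr) = 0)
    (hd_stat : 2 * (75 * m / (24 * h) - 5 * m * h * ω^2 / 48) * d
      + -(15 * Real.sqrt 5 * m / (12 * h)) * (qℓ - qr) = 0) :
    2 * Ld m h ω qℓ qξ q1mξ qr =
      2 * (m / (12 * h) * (26 * (qℓ^2 + qr^2) - 2 * qℓ * qr) - m * h * ω^2 / 24 * (qℓ^2 + qr^2))
      - 25 * m / (12 * h) * (qℓ + qr) * s
      - 15 * Real.sqrt 5 * m / (12 * h) * (qℓ - qr) * d := by
  rw [Ld_eq_sum_diff, hs, hd, mul_add, mul_add, two_mul_quadratic_eq_of_stationary hs_stat,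
    two_mul_quadratic_eq_of_stationary hd_stat]
  ring

theorem reduced_lagrangian_general (m h ω : ℝ) (hh : 0 < h)
    (hδ : (h^2 * ω^2 - 30) * (h^2 * ω^2 - 10) ≠ 0) (qℓ qr : ℝ) :
    Ld m h ω qℓ
      ((1 / ((h^2 * ω^2 - 30) * (h^2 * ω^2 - 10))) *
        (-5 * (h^2 * ω^2 - 30) * (qr + qℓ) + 3 * Real.sqrt 5 * (h^2 * ω^2 - 10) * (qr - qℓ)))
      ((1 / ((h^2 * ω^2 - 30) * (h^2 * ω^2 - 10))) *
        (-5 * (h^2 * ω^2 - 30) * (qr + qℓ) - 3 * Real.sqrt 5 * (h^2 * ω^2 - 10) * (qr - qℓ)))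
      qr
    = (1 / (6 * h * ((h^2 * ω^2 - 30) * (h^2 * ω^2 - 10)))) *
        ((m/4) * (-(h^6 * ω^6) + 92 * h^4 * ω^4 - 1680 * h^2 * ω^2 + 3600) * (qℓ^2 + qr^2)
          - m * (h^4 * ω^4 + 60 * h^2 * ω^2 + 1800) * qℓ * qr) := by
  have h30 : h^2 * ω^2 - 30 ≠ 0 := left_ne_zero_of_mul hδ
  have h10 : h^2 * ω^2 - 10 ≠ 0 := right_ne_zero_of_mul hδ
  have h0 : h ≠ 0 := hh.ne'
  have hsqrt : Real.sqrt 5 ^ 2 = 5 := Real.sq_sqrt (by norm_num)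
  have hL := two_mul_Ld_eq_of_internal_stationary
    (m := m) (h := h) (ω := ω) (qℓ := qℓ) (qr := qr)
    (internal_add_eq h30 h10 (3 * Real.sqrt 5) (qr + qℓ) (qr - qℓ))
    (internal_sub_eq h30 h10 (3 * Real.sqrt 5) (qr + qℓ) (qr - qℓ))
    (by field_simp; ring) (by field_simp; ring)
  rw [← mul_right_inj' (two_ne_zero' ℝ), hL]
  field_simp
  grind

/-- Substituting the solved internal degrees of freedom into the discrete Lagrangian
yields the reduced Lagrangian L_r(q_ℓ, q_r). -/
theorem reduced_lagrangian (m h ω : ℝ) (hm : 0 < m) (hh : 0 < h) (hω : 0 < ω)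
    (hδ : (h^2 * ω^2 - 30) * (h^2 * ω^2 - 10) ≠ 0) (qℓ qr : ℝ) :
    Ld m h ω qℓ
      ((1 / ((h^2 * ω^2 - 30) * (h^2 * ω^2 - 10))) *
        (-5 * (h^2 * ω^2 - 30) * (qr + qℓ) + 3 * Real.sqrt 5 * (h^2 * ω^2 - 10) * (qr - qℓ)))
      ((1 / ((h^2 * ω^2 - 30) * (h^2 * ω^2 - 10))) *
        (-5 * (h^2 * ω^2 - 30) * (qr + qℓ) - 3 * Real.sqrt 5 * (h^2 * ω^2 - 10) * (qr - qℓ)))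
      qr
    = (1 / (6 * h * ((h^2 * ω^2 - 30) * (h^2 * ω^2 - 10)))) *
        ((m/4) * (-(h^6 * ω^6) + 92 * h^4 * ω^4 - 1680 * h^2 * ω^2 + 3600) * (qℓ^2 + qr^2)
          - m * (h^4 * ω^4 + 60 * h^2 * ω^2 + 1800) * qℓ * qr) :=
  reduced_lagrangian_general m h ω hh hδ qℓ qr
end

section
/- Let m, h, ω > 0 with (h²ω²−30)(h²ω²−10) ≠ 0. For all real q_{j−1}, q_j, q_{j+1}, the discrete Euler–Lagrange equation ∂L_r/∂q_r(q_{j−1}, q_j) + ∂L_r/∂q_ℓ(q_j, q_{j+1}) = 0 holds if and only if (1/h²)(q_{j−1} − 2q_j + q_{j+1}) + (ω²/30)(q_{j−1} + 28q_j + q_{j+1}) + (ω⁴h²/1800)(q_{j−1} − 92q_j + q_{j+1}) + (ω⁶h⁴/1800) q_j = 0. -/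
/-- The reduced Lagrangian of the harmonic oscillator with mass `m`, time step `h`
and angular frequency `ω`. -/
noncomputable def Lr (m h ω qℓ qr : ℝ) : ℝ :=
  (1 / (6 * h * ((h^2 * ω^2 - 30) * (h^2 * ω^2 - 10)))) *
    ((m/4) * (-(h^6 * ω^6) + 92 * h^4 * ω^4 - 1680 * h^2 * ω^2 + 3600) * (qℓ^2 + qr^2)
      - m * (h^4 * ω^4 + 60 * h^2 * ω^2 + 1800) * qℓ * qr)

/-! `Lr` is the symmetric quadratic form `c (a (x² + y²) - b x y)`; its two partial derivatives at
`q_j` therefore add up to `c (4 a q_j - b (q_{j-1} + q_{j+1}))`, and multiplying the Lobatto scheme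
by `1800 h²` turns it into the same linear combination up to the nonzero factor `-6 h δ / m`. -/

theorem hasDerivAt_symmQuadratic_snd (c a b x y : ℝ) :
    HasDerivAt (fun y => c * (a * (x^2 + y^2) - b * x * y)) (c * (2 * a * y - b * x)) y := by
  have hquad := ((hasDerivAt_pow 2 y).const_add (x^2)).const_mul a
  have hlin := (hasDerivAt_id y).const_mul (b * x)
  exact ((hquad.sub hlin).const_mul c).congr_deriv (by push_cast; ring)

theorem Lr_comm (m h ω x y : ℝ) : Lr m h ω x y = Lr m h ω y x := by
  unfold Lr; ring

theorem deriv_Lr_snd (m h ω qℓ qr : ℝ) :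
    deriv (fun y => Lr m h ω qℓ y) qr =
      m / (6 * h * ((h^2 * ω^2 - 30) * (h^2 * ω^2 - 10))) *
        ((-(h^6 * ω^6) + 92 * h^4 * ω^4 - 1680 * h^2 * ω^2 + 3600) / 2 * qr
          - (h^4 * ω^4 + 60 * h^2 * ω^2 + 1800) * qℓ) := by
  unfold Lr
  rw [(hasDerivAt_symmQuadratic_snd _ _ _ qℓ qr).deriv]
  ring

theorem deriv_Lr_snd_add_deriv_Lr_fst (m h ω qjm1 qj qjp1 : ℝ) :
    deriv (fun y => Lr m h ω qjm1 y) qj + deriv (fun x => Lr m h ω x qjp1) qj =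
      -(m / (6 * h * ((h^2 * ω^2 - 30) * (h^2 * ω^2 - 10)))) *
        ((h^4 * ω^4 + 60 * h^2 * ω^2 + 1800) * (qjm1 + qjp1)
          - (-(h^6 * ω^6) + 92 * h^4 * ω^4 - 1680 * h^2 * ω^2 + 3600) * qj) := by
  simp_rw [Lr_comm m h ω _ qjp1, deriv_Lr_snd]
  ring

theorem lobatto_scheme_mul_eq (h ω qjm1 qj qjp1 : ℝ) (hh : h ≠ 0) :
    1800 * h^2 * ((1/h^2) * (qjm1 - 2*qj + qjp1)
        + (ω^2/30) * (qjm1 + 28*qj + qjp1)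
        + (ω^4 * h^2/1800) * (qjm1 - 92*qj + qjp1)
        + (ω^6 * h^4/1800) * qj) =
      (h^4 * ω^4 + 60 * h^2 * ω^2 + 1800) * (qjm1 + qjp1)
        - (-(h^6 * ω^6) + 92 * h^4 * ω^4 - 1680 * h^2 * ω^2 + 3600) * qj := by
  field_simp
  ring

theorem discrete_euler_lagrange_iff_general (m h ω : ℝ) (hm : 0 < m) (hh : 0 < h)
    (hδ : (h^2 * ω^2 - 30) * (h^2 * ω^2 - 10) ≠ 0) (qjm1 qj qjp1 : ℝ) :
    deriv (fun y => Lr m h ω qjm1 y) qj + deriv (fun x => Lr m h ω x qjp1) qj = 0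
    ↔ (1/h^2) * (qjm1 - 2*qj + qjp1)
        + (ω^2/30) * (qjm1 + 28*qj + qjp1)
        + (ω^4 * h^2/1800) * (qjm1 - 92*qj + qjp1)
        + (ω^6 * h^4/1800) * qj = 0 := by
  have hfactor : -(m / (6 * h * ((h^2 * ω^2 - 30) * (h^2 * ω^2 - 10)))) ≠ 0 :=
    neg_ne_zero.mpr (div_ne_zero hm.ne' (mul_ne_zero (by positivity) hδ))
  have hscale : 1800 * h^2 ≠ 0 := by positivity
  rw [deriv_Lr_snd_add_deriv_Lr_fst, mul_eq_zero, or_iff_right hfactor,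
    ← lobatto_scheme_mul_eq h ω qjm1 qj qjp1 hh.ne', mul_eq_zero, or_iff_right hscale]

/-- The discrete Euler–Lagrange equation of the reduced Lagrangian is the three-point
Lobatto scheme for the harmonic oscillator. -/
theorem discrete_euler_lagrange_iff (m h ω : ℝ) (hm : 0 < m) (hh : 0 < h) (hω : 0 < ω)
    (hδ : (h^2 * ω^2 - 30) * (h^2 * ω^2 - 10) ≠ 0) (qjm1 qj qjp1 : ℝ) :
    deriv (fun y => Lr m h ω qjm1 y) qj + deriv (fun x => Lr m h ω x qjp1) qj = 0
    ↔ (1/h^2) * (qjm1 - 2*qj + qjp1)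
        + (ω^2/30) * (qjm1 + 28*qj + qjp1)
        + (ω^4 * h^2/1800) * (qjm1 - 92*qj + qjp1)
        + (ω^6 * h^4/1800) * qj = 0 :=
  discrete_euler_lagrange_iff_general m h ω hm hh hδ qjm1 qj qjp1
end

section
/- If 0 < x < 42 − 6√29, then (x³ − 92x² + 1680x − 3600)² − 4(x² + 60x + 1800)² < 0. Equivalently, for h, ω > 0 with hω < √(42 − 6√29), the discriminant of the characteristic polynomial of the Lobatto scheme is negative. -/
/-! The discriminant factors as `(B̃ + 2Ã)(B̃ - 2Ã)` with `B̃ + 2Ã = x (x - 30) (x - 60)` and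
`B̃ - 2Ã = (x - 10) (x² - 84x + 720)`, the quadratic having roots `42 ± 6√29`. Since
`42 - 6√29 < 10`, on `0 < x < 42 - 6√29` the first factor is positive and the second negative. -/

theorem lobatto_discriminant_eq (x : ℝ) :
    (x^3 - 92*x^2 + 1680*x - 3600)^2 - 4 * (x^2 + 60*x + 1800)^2 =
      (x * (x - 30) * (x - 60)) * ((x - 10) * (x - (42 - 6 * √29)) * (x - (42 + 6 * √29))) := by
  linear_combination (36 * x * (x - 30) * (x - 60) * (x - 10)) *
    Real.sq_sqrt (show (0 : ℝ) ≤ 29 by norm_num)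

theorem lobatto_bound_lt_ten : 42 - 6 * √29 < 10 := by
  have : (16 / 3 : ℝ) < √29 := (Real.lt_sqrt (by norm_num)).2 (by norm_num)
  linarith

/-- Under the stability condition 0 < x < 42 − 6√29 (x = h²ω²), the discriminant
B̃² − 4Ã² of the characteristic polynomial of the Lobatto scheme is negative. -/
theorem lobatto_discriminant_neg (x : ℝ) (hx0 : 0 < x) (hx : x < 42 - 6 * Real.sqrt 29) :
    (x^3 - 92*x^2 + 1680*x - 3600)^2 - 4 * (x^2 + 60*x + 1800)^2 < 0 := by
  have hx10 : x < 10 := hx.trans lobatto_bound_lt_ten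
  have hsqrt : 0 ≤ √29 := Real.sqrt_nonneg 29
  rw [lobatto_discriminant_eq]
  refine mul_neg_of_pos_of_neg ?_ ?_
  · exact mul_pos_of_neg_of_neg (mul_neg_of_pos_of_neg hx0 (by linarith)) (by linarith)
  · exact mul_neg_of_pos_of_neg (mul_pos_of_neg_of_neg (by linarith) (by linarith)) (by linarith)
end

section
/- Let h, ω > 0 with hω < √(42 − 6√29), and set x = h²ω², Ã = x² + 60x + 1800, B̃ = x³ − 92x² + 1680x − 3600. Then every complex number z satisfying Ã z² + B̃ z + Ã = 0 has modulus |z| = 1. -/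
/-!
A palindromic real quadratic `A z² + B z + A` with negative discriminant `B² - 4A²` has no real
root, so each root `z` differs from its conjugate, which is also a root; subtracting the two
equations gives `A (z + z̄) = -B`, and then the equation itself collapses to `A (1 - z z̄) = 0`.
For the Lobatto scheme `B̃ - 2Ã = (x - 10)(x² - 84x + 720)` and `B̃ + 2Ã = x (x - 30)(x - 60)`;
the smaller root `42 - 6√29` of `x² - 84x + 720` is the first sign change of either product on
`x > 0`, so `|B̃| < 2Ã` below it.
-/

open Complex ComplexConjugate

theorem ne_zero_of_discrim_neg {K : Type*} [CommRing K] [LinearOrder K] [IsStrictOrderedRing K]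
    {a b c : K} (h : discrim a b c < 0) : a ≠ 0 := by
  rintro rfl
  rw [discrim, mul_zero, zero_mul, sub_zero] at h
  exact (sq_nonneg b).not_gt h

theorem Complex.im_ne_zero_of_palindromic_quadratic {A B : ℝ} (hAB : discrim A B A < 0) {z : ℂ}
    (hz : (A : ℂ) * z ^ 2 + B * z + A = 0) : z.im ≠ 0 := by
  intro him
  have hA := ne_zero_of_discrim_neg hAB
  have hreal : A * (z.re * z.re) + B * z.re + A = 0 := by
    have := congrArg re hz
    simp only [sq, add_re, mul_re, ofReal_re, ofReal_im, him, zero_re] at this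
    linear_combination this
  rw [(quadratic_eq_zero_iff_discrim_eq_sq hA z.re).mp hreal] at hAB
  exact (sq_nonneg _).not_gt hAB

theorem Complex.norm_eq_one_of_palindromic_quadratic {A B : ℝ} (hAB : discrim A B A < 0) {z : ℂ}
    (hz : (A : ℂ) * z ^ 2 + B * z + A = 0) : ‖z‖ = 1 := by
  have hconj : (A : ℂ) * conj z ^ 2 + B * conj z + A = 0 := by
    simpa only [map_add, map_mul, map_pow, conj_ofReal, map_zero] using congrArg conj hz
  have hne : z - conj z ≠ 0 := by
    rw [sub_conj]
    simpa using im_ne_zero_of_palindromic_quadratic hAB hz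
  have hfactor : (z - conj z) * (A * (z + conj z) + B) = 0 := by linear_combination hz - hconj
  have hsum := (mul_eq_zero.mp hfactor).resolve_left hne
  have hA : (A : ℂ) ≠ 0 := ofReal_ne_zero.mpr (ne_zero_of_discrim_neg hAB)
  have hnormSq : (normSq z : ℂ) = 1 := by
    rw [← mul_conj]
    exact mul_left_cancel₀ hA (by linear_combination -hz + z * hsum)
  rw [norm_def, show normSq z = 1 by exact_mod_cast hnormSq, Real.sqrt_one]

theorem lobatto_discrim_neg {x : ℝ} (hx₀ : 0 < x) (hx : x < 42 - 6 * √29) :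
    discrim (x ^ 2 + 60 * x + 1800) (x ^ 3 - 92 * x ^ 2 + 1680 * x - 3600)
      (x ^ 2 + 60 * x + 1800) < 0 := by
  have hsqrt29 : √29 ^ 2 = 29 := Real.sq_sqrt (by norm_num)
  have hx10 : x < 10 := by nlinarith [Real.sqrt_nonneg 29]
  have hquad : 0 < x ^ 2 - 84 * x + 720 := by
    have hfar : 0 < 42 + 6 * √29 - x := by nlinarith [Real.sqrt_nonneg 29]
    nlinarith [mul_pos (sub_pos.mpr hx) hfar]
  have hlower : 0 < x * (30 - x) * (60 - x) :=
    mul_pos (mul_pos hx₀ (by linarith)) (by linarith)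
  have hupper : 0 < (10 - x) * (x ^ 2 - 84 * x + 720) := mul_pos (by linarith) hquad
  rw [discrim, sub_neg, show 4 * (x ^ 2 + 60 * x + 1800) * (x ^ 2 + 60 * x + 1800)
    = (2 * (x ^ 2 + 60 * x + 1800)) ^ 2 by ring]
  exact sq_lt_sq' (by nlinarith) (by nlinarith)

/-- Under the stability condition hω < √(42 − 6√29), every complex root of the
characteristic polynomial Ã z² + B̃ z + Ã of the Lobatto scheme has modulus one. -/
theorem lobatto_roots_unit_modulus (h ω : ℝ) (hh : 0 < h) (hω : 0 < ω)
    (hstab : h * ω < Real.sqrt (42 - 6 * Real.sqrt 29)) (z : ℂ)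
    (hz : ((h^2 * ω^2)^2 + 60 * (h^2 * ω^2) + 1800 : ℝ) * z^2
        + ((h^2 * ω^2)^3 - 92 * (h^2 * ω^2)^2 + 1680 * (h^2 * ω^2) - 3600 : ℝ) * z
        + ((h^2 * ω^2)^2 + 60 * (h^2 * ω^2) + 1800 : ℝ) = 0) :
    ‖z‖ = 1 := by
  have hx : h ^ 2 * ω ^ 2 < 42 - 6 * √29 := by
    rw [← mul_pow]
    exact (Real.lt_sqrt (by positivity)).mp hstab
  exact norm_eq_one_of_palindromic_quadratic (lobatto_discrim_neg (by positivity) hx) hz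
end

section
/- Let h, ω > 0 and m > 0, and define δ̃ = 1 + h²ω²/30 + h⁴ω⁴/1800, a = 1 − (7/15)h²ω² + (23/900)h⁴ω⁴ − (1/3600)h⁶ω⁶, b = (mhω²/43200)(h²ω²−60)(h⁴ω⁴−84h²ω²+720), c = (h/m)(1 − (2/15)h²ω² + (1/300)h⁴ω⁴). Then a² − bc = δ̃², and consequently the 2×2 update matrix Φ = (1/δ̃)[[a, b],[c, a]] of the Lobatto scheme has determinant 1, i.e. the scheme is symplectic. -/
/-!
Every entry of the update matrix depends on `h`, `ω` only through `x = h²ω²`, and in the product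
`b c` the mass cancels. So `a² − b c = δ̃²` is a polynomial identity of degree six in the single
variable `x`, and a matrix `(1/δ̃)[[a, b], [c, a]]` has determinant `(a² − b c)/δ̃² = 1`.
-/

theorem det_div_of_sq_sub_mul_eq_sq {K : Type*} [Field K] {a b c δ : K} (hδ : δ ≠ 0)
    (habc : a ^ 2 - b * c = δ ^ 2) :
    (!![a / δ, b / δ; c / δ, a / δ] : Matrix (Fin 2) (Fin 2) K).det = 1 := by
  rw [Matrix.det_fin_two_of, div_mul_div_comm, div_mul_div_comm, div_sub_div_same, ← sq, ← sq,
    habc, div_self (pow_ne_zero 2 hδ)]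

theorem lobatto_polynomial_identity (x : ℝ) :
    (1 - (7/15)*x + (23/900)*x^2 - (1/3600)*x^3)^2
      - x/43200 * (x - 60) * (x^2 - 84*x + 720) * (1 - (2/15)*x + (1/300)*x^2)
      = (1 + x/30 + x^2/1800)^2 := by
  ring

theorem lobatto_symplectic_general (h ω m : ℝ) (hm : 0 < m) :
    let δ : ℝ := 1 + h^2*ω^2/30 + h^4*ω^4/1800
    let a : ℝ := 1 - (7/15)*h^2*ω^2 + (23/900)*h^4*ω^4 - (1/3600)*h^6*ω^6
    let b : ℝ := (m*h*ω^2/43200) * (h^2*ω^2 - 60) * (h^4*ω^4 - 84*h^2*ω^2 + 720)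
    let c : ℝ := (h/m) * (1 - (2/15)*h^2*ω^2 + (1/300)*h^4*ω^4)
    a^2 - b*c = δ^2 ∧ (!![a/δ, b/δ; c/δ, a/δ] : Matrix (Fin 2) (Fin 2) ℝ).det = 1 := by
  intro δ a b c
  have hbc : b * c = h^2*ω^2/43200 * (h^2*ω^2 - 60) * ((h^2*ω^2)^2 - 84*(h^2*ω^2) + 720)
      * (1 - (2/15)*(h^2*ω^2) + (1/300)*(h^2*ω^2)^2) := by
    simp only [b, c]
    field_simp
  have hδ : δ ≠ 0 := by positivity
  have habc : a^2 - b*c = δ^2 := by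
    rw [hbc]
    convert lobatto_polynomial_identity (h^2*ω^2) using 2 <;> ring
  exact ⟨habc, det_div_of_sq_sub_mul_eq_sq hδ habc⟩

/-- For the Lobatto update matrix Φ = (1/δ̃)[[a, b],[c, a]] of the harmonic oscillator
scheme, a² − bc = δ̃², hence det Φ = 1 and the scheme is symplectic. -/
theorem lobatto_symplectic (h ω m : ℝ) (hh : 0 < h) (hω : 0 < ω) (hm : 0 < m) :
    let δ : ℝ := 1 + h^2*ω^2/30 + h^4*ω^4/1800
    let a : ℝ := 1 - (7/15)*h^2*ω^2 + (23/900)*h^4*ω^4 - (1/3600)*h^6*ω^6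
    let b : ℝ := (m*h*ω^2/43200) * (h^2*ω^2 - 60) * (h^4*ω^4 - 84*h^2*ω^2 + 720)
    let c : ℝ := (h/m) * (1 - (2/15)*h^2*ω^2 + (1/300)*h^4*ω^4)
    a^2 - b*c = δ^2 ∧ (!![a/δ, b/δ; c/δ, a/δ] : Matrix (Fin 2) (Fin 2) ℝ).det = 1 :=
  lobatto_symplectic_general h ω m hm
end

section
/- Let h, ω > 0 and m > 0, with δ̃, a, b, c as in the Lobatto scheme for the harmonic oscillator, and define the discrete energy H_d(p, q) = (c/(2δ̃))p² − (b/(2δ̃))q². If p′ = (a p + b q)/δ̃ and q′ = (c p + a q)/δ̃, then H_d(p′, q′) = H_d(p, q); that is, the Lobatto scheme exactly preserves the discrete energy H_d. -/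
/-!
The matrix `[[a, b], [c, a]]` multiplies the quadratic form `c p² - b q²` by its determinant
`a² - b c`. For the Lobatto coefficients this determinant is exactly `δ̃²`, so the step
`Φ = δ̃⁻¹ [[a, b], [c, a]]` has determinant one and leaves the discrete energy invariant.
-/

section EnergyForm

variable {K : Type*} [Field K]

theorem sub_mul_sq_map_eq_det_mul {R : Type*} [CommRing R] (a b c p q : R) :
    c * (a * p + b * q) ^ 2 - b * (c * p + a * q) ^ 2 =
      (a ^ 2 - b * c) * (c * p ^ 2 - b * q ^ 2) := by
  ring

theorem energy_map_eq_of_det_eq_sq {a b c δ : K} (hδ : δ ≠ 0) (hdet : a ^ 2 - b * c = δ ^ 2)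
    (p q : K) :
    c / (2 * δ) * ((a * p + b * q) / δ) ^ 2 - b / (2 * δ) * ((c * p + a * q) / δ) ^ 2 =
      c / (2 * δ) * p ^ 2 - b / (2 * δ) * q ^ 2 := by
  calc c / (2 * δ) * ((a * p + b * q) / δ) ^ 2 - b / (2 * δ) * ((c * p + a * q) / δ) ^ 2
      = (c * (a * p + b * q) ^ 2 - b * (c * p + a * q) ^ 2) / δ ^ 2 / (2 * δ) := by ring
    _ = (c * p ^ 2 - b * q ^ 2) / (2 * δ) := by
      rw [sub_mul_sq_map_eq_det_mul, hdet, mul_div_cancel_left₀ _ (pow_ne_zero 2 hδ)]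
    _ = c / (2 * δ) * p ^ 2 - b / (2 * δ) * q ^ 2 := by ring

end EnergyForm

section Lobatto

variable (h ω m : ℝ)

noncomputable def lobattoDelta : ℝ := 1 + h^2*ω^2/30 + h^4*ω^4/1800

noncomputable def lobattoA : ℝ :=
  1 - (7/15)*h^2*ω^2 + (23/900)*h^4*ω^4 - (1/3600)*h^6*ω^6

noncomputable def lobattoB : ℝ :=
  (m*h*ω^2/43200) * (h^2*ω^2 - 60) * (h^4*ω^4 - 84*h^2*ω^2 + 720)

noncomputable def lobattoC : ℝ := (h/m) * (1 - (2/15)*h^2*ω^2 + (1/300)*h^4*ω^4)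

theorem lobattoDelta_pos : 0 < lobattoDelta h ω := by
  unfold lobattoDelta
  positivity

theorem lobatto_det_eq_sq {m : ℝ} (hm : m ≠ 0) :
    lobattoA h ω ^ 2 - lobattoB h ω m * lobattoC h ω m = lobattoDelta h ω ^ 2 := by
  unfold lobattoA lobattoB lobattoC lobattoDelta
  field_simp
  ring

end Lobatto

theorem lobatto_preserves_discrete_energy_general (h ω m : ℝ)
    (hm : 0 < m) (p q : ℝ) :
    let δ : ℝ := 1 + h^2*ω^2/30 + h^4*ω^4/1800
    let a : ℝ := 1 - (7/15)*h^2*ω^2 + (23/900)*h^4*ω^4 - (1/3600)*h^6*ω^6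
    let b : ℝ := (m*h*ω^2/43200) * (h^2*ω^2 - 60) * (h^4*ω^4 - 84*h^2*ω^2 + 720)
    let c : ℝ := (h/m) * (1 - (2/15)*h^2*ω^2 + (1/300)*h^4*ω^4)
    let Hd : ℝ → ℝ → ℝ := fun p q => (c/(2*δ)) * p^2 - (b/(2*δ)) * q^2
    Hd ((a*p + b*q)/δ) ((c*p + a*q)/δ) = Hd p q :=
  energy_map_eq_of_det_eq_sq (lobattoDelta_pos h ω).ne' (lobatto_det_eq_sq h ω hm.ne') p q

/-- The Lobatto scheme for the harmonic oscillator exactly preserves the discrete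
energy H_d(p, q) = (c/(2δ̃))p² − (b/(2δ̃))q². -/
theorem lobatto_preserves_discrete_energy (h ω m : ℝ) (hh : 0 < h) (hω : 0 < ω)
    (hm : 0 < m) (p q : ℝ) :
    let δ : ℝ := 1 + h^2*ω^2/30 + h^4*ω^4/1800
    let a : ℝ := 1 - (7/15)*h^2*ω^2 + (23/900)*h^4*ω^4 - (1/3600)*h^6*ω^6
    let b : ℝ := (m*h*ω^2/43200) * (h^2*ω^2 - 60) * (h^4*ω^4 - 84*h^2*ω^2 + 720)
    let c : ℝ := (h/m) * (1 - (2/15)*h^2*ω^2 + (1/300)*h^4*ω^4)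
    let Hd : ℝ → ℝ → ℝ := fun p q => (c/(2*δ)) * p^2 - (b/(2*δ)) * q^2
    Hd ((a*p + b*q)/δ) ((c*p + a*q)/δ) = Hd p q :=
  lobatto_preserves_discrete_energy_general h ω m hm p q
end

section
/- Let m, h, ω > 0 with hω < √(42 − 6√29). Then b = (mhω²/43200)(h²ω²−60)(h⁴ω⁴−84h²ω²+720) satisfies b < 0 (equivalently −b > 0), so the coefficient of q² in the preserved discrete energy H_d(p,q) = (c/(2δ̃))p² − (b/(2δ̃))q² is positive. -/
/-!
Put `x = (hω)²`. The last factor of `b` is `x² - 84x + 720`, whose roots are `42 ± 6√29`, and the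
stability condition says exactly that `x` lies below the smaller root. Hence that factor is
positive, while `x - 60 < 0` and the prefactor `mhω²/43200` is positive.
-/

lemma quadratic_lobatto_eq (x : ℝ) :
    x ^ 2 - 84 * x + 720 = (x - (42 - 6 * √29)) * (x - (42 + 6 * √29)) := by
  have h29 : √29 ^ 2 = 29 := Real.sq_sqrt (by norm_num)
  linear_combination 36 * h29

lemma quadratic_lobatto_pos_of_lt {x : ℝ} (hx : x < 42 - 6 * √29) :
    0 < x ^ 2 - 84 * x + 720 := by
  have hroots : 42 - 6 * √29 ≤ 42 + 6 * √29 := by linarith [Real.sqrt_nonneg 29]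
  rw [quadratic_lobatto_eq]
  exact mul_pos_of_neg_of_neg (sub_neg.2 hx) (sub_neg.2 (hx.trans_le hroots))

/-- Under the stability condition hω < √(42 − 6√29), the coefficient
b = (mhω²/43200)(h²ω²−60)(h⁴ω⁴−84h²ω²+720) is negative, so the coefficient of q² in
the preserved discrete energy is positive. -/
theorem lobatto_b_neg (m h ω : ℝ) (hm : 0 < m) (hh : 0 < h) (hω : 0 < ω)
    (hstab : h * ω < Real.sqrt (42 - 6 * Real.sqrt 29)) :
    (m*h*ω^2/43200) * (h^2*ω^2 - 60) * (h^4*ω^4 - 84*h^2*ω^2 + 720) < 0 := by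
  have hx : (h * ω) ^ 2 < 42 - 6 * √29 := (Real.lt_sqrt (by positivity)).1 hstab
  have hprefactor : 0 < m * h * ω ^ 2 / 43200 := by positivity
  have hlinear : (h * ω) ^ 2 - 60 < 0 := by linarith [Real.sqrt_nonneg 29]
  calc (m*h*ω^2/43200) * (h^2*ω^2 - 60) * (h^4*ω^4 - 84*h^2*ω^2 + 720)
      = (m * h * ω ^ 2 / 43200) * ((h * ω) ^ 2 - 60)
          * (((h * ω) ^ 2) ^ 2 - 84 * (h * ω) ^ 2 + 720) := by ring
    _ < 0 := mul_neg_of_neg_of_pos (mul_neg_of_pos_of_neg hprefactor hlinear)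
        (quadratic_lobatto_pos_of_lt hx)
end

section
/- Let m, h, ω > 0 with h²ω² ≠ 10 and h⁴ω⁴ − 84h²ω² + 720 ≠ 0, and let (p_j)_{j∈ℤ}, (q_j)_{j∈ℤ} be real sequences satisfying, for every j, both (p_{j+1} − p_j)/h = −mω² (h²ω² − 60)/(12(h²ω² − 10)) · (q_j + q_{j+1}) and (q_{j+1} − q_j)/h = 24(30 − h²ω²)/(h⁴ω⁴ − 84h²ω² + 720) · (p_j + p_{j+1})/(2m). Then for every j, (1/h²)(q_{j−1} − 2q_j + q_{j+1}) + (ω²/30)(q_{j−1} + 28q_j + q_{j+1}) + (ω⁴h²/1800)(q_{j−1} − 92q_j + q_{j+1}) + (ω⁶h⁴/1800) q_j = 0. -/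
/-!
Differencing the state equation at `j - 1` and `j` turns the second difference of `q` into a
combination of momentum differences, which the momentum equation expresses through `q` again: for
any scheme `Δp = -α (q_j + q_{j+1})`, `Δq = β (p_j + p_{j+1})` one gets
`q_{j-1} - 2 q_j + q_{j+1} = -αβ (q_{j-1} + 2 q_j + q_{j+1})`.
For the Lobatto coefficients `αβ` is a rational function of `E = h²ω²` alone, and after clearing
denominators this relation is a multiple of the three-point scheme.
-/

theorem second_difference_eq_of_midpoint_scheme {R : Type*} [CommRing R] {p q : ℤ → R} {α β : R}
    (hp : ∀ j, p (j + 1) - p j = -α * (q j + q (j + 1)))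
    (hq : ∀ j, q (j + 1) - q j = β * (p j + p (j + 1))) (j : ℤ) :
    q (j - 1) - 2 * q j + q (j + 1) = -(α * β) * (q (j - 1) + 2 * q j + q (j + 1)) := by
  have hp' := hp (j - 1)
  have hq' := hq (j - 1)
  rw [sub_add_cancel] at hp' hq'
  linear_combination hq j - hq' + β * (hp j + hp')

/- The multiplier is `-1/4` because
`(E - 10)(E² - 84E + 720) - E(E - 30)(E - 60) = -4(E² + 60E + 1800)`. -/
theorem lobatto_three_point_of_second_difference {E x y z : ℝ}
    (hS : (E - 10) * (E^2 - 84 * E + 720) * (x - 2 * y + z)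
        = -(E * (E - 60) * (30 - E)) * (x + 2 * y + z)) :
    1800 * (x - 2 * y + z) + 60 * E * (x + 28 * y + z) + E^2 * (x - 92 * y + z) + E^3 * y = 0 := by
  linear_combination (-1/4 : ℝ) * hS

theorem lobatto_momentum_state_implies_three_point_general (m h ω : ℝ)
    (hm : 0 < m) (hh : 0 < h)
    (h10 : h^2 * ω^2 ≠ 10) (h720 : h^4 * ω^4 - 84 * h^2 * ω^2 + 720 ≠ 0)
    (p q : ℤ → ℝ)
    (hp : ∀ j : ℤ, (p (j+1) - p j) / h
        = -m * ω^2 * ((h^2 * ω^2 - 60) / (12 * (h^2 * ω^2 - 10))) * (q j + q (j+1)))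
    (hq : ∀ j : ℤ, (q (j+1) - q j) / h
        = 24 * (30 - h^2 * ω^2) / (h^4 * ω^4 - 84 * h^2 * ω^2 + 720)
            * ((p j + p (j+1)) / (2*m))) :
    ∀ j : ℤ, (1/h^2) * (q (j-1) - 2 * q j + q (j+1))
        + (ω^2/30) * (q (j-1) + 28 * q j + q (j+1))
        + (ω^4 * h^2/1800) * (q (j-1) - 92 * q j + q (j+1))
        + (ω^6 * h^4/1800) * q j = 0 := by
  intro j
  set α := h * (m * ω^2 * ((h^2 * ω^2 - 60) / (12 * (h^2 * ω^2 - 10))))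
  set β := h * (24 * (30 - h^2 * ω^2) / (h^4 * ω^4 - 84 * h^2 * ω^2 + 720) / (2 * m))
  have hS := second_difference_eq_of_midpoint_scheme (p := p) (q := q) (α := α) (β := β)
    (fun j => by rw [(div_eq_iff hh.ne').1 (hp j)]; ring)
    (fun j => by rw [(div_eq_iff hh.ne').1 (hq j)]; ring) j
  have hE10 : h^2 * ω^2 - 10 ≠ 0 := sub_ne_zero.mpr h10
  have hαβ_div : α * β = h^2 * ω^2 * (h^2 * ω^2 - 60) * (30 - h^2 * ω^2)
      / ((h^2 * ω^2 - 10) * (h^4 * ω^4 - 84 * h^2 * ω^2 + 720)) := by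
    have hm0 : m ≠ 0 := hm.ne'
    simp only [α, β]
    field_simp
    ring
  have hαβ : (h^2 * ω^2 - 10) * (h^4 * ω^4 - 84 * h^2 * ω^2 + 720) * (α * β)
      = h^2 * ω^2 * (h^2 * ω^2 - 60) * (30 - h^2 * ω^2) := by
    rw [hαβ_div]; exact mul_div_cancel₀ _ (mul_ne_zero hE10 h720)
  have hscheme := lobatto_three_point_of_second_difference (E := h^2 * ω^2)
    (by rw [hS, ← hαβ]; ring)
  field_simp
  linear_combination 30 * hscheme

/-- Eliminating the momentum from the momentum–state form of the Lobatto scheme for the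
harmonic oscillator yields the three-point scheme in the state variable. -/
theorem lobatto_momentum_state_implies_three_point (m h ω : ℝ)
    (hm : 0 < m) (hh : 0 < h) (hω : 0 < ω)
    (h10 : h^2 * ω^2 ≠ 10) (h720 : h^4 * ω^4 - 84 * h^2 * ω^2 + 720 ≠ 0)
    (p q : ℤ → ℝ)
    (hp : ∀ j : ℤ, (p (j+1) - p j) / h
        = -m * ω^2 * ((h^2 * ω^2 - 60) / (12 * (h^2 * ω^2 - 10))) * (q j + q (j+1)))
    (hq : ∀ j : ℤ, (q (j+1) - q j) / h
        = 24 * (30 - h^2 * ω^2) / (h^4 * ω^4 - 84 * h^2 * ω^2 + 720)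
            * ((p j + p (j+1)) / (2*m))) :
    ∀ j : ℤ, (1/h^2) * (q (j-1) - 2 * q j + q (j+1))
        + (ω^2/30) * (q (j-1) + 28 * q j + q (j+1))
        + (ω^4 * h^2/1800) * (q (j-1) - 92 * q j + q (j+1))
        + (ω^6 * h^4/1800) * q j = 0 :=
  lobatto_momentum_state_implies_three_point_general m h ω hm hh h10 h720 p q hp hq
end
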